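/- Let {S_α} be a set of self-adjoint operators, M := {S_α}' their commutant, σ a full-rank state. Let X belong to a *-subalgebra V of M that is invariant under the modular operator Δ_σ(Y) = σYσ^{−1}. Then X commutes with σ^{it} S_α σ^{−it} for all t ∈ ℝ and all α. -/

import Mathlib

open Matrix ComplexOrder

noncomputable section

def matLog {d : ℕ} (A : Matrix (Fin d) (Fin d) ℂ) : Matrix (Fin d) (Fin d) ℂ :=
  cfc Real.log A

/-- The modular unitary `σ^{it} = exp(i t log σ)`. -/
def modUnit {d : ℕ} (σ : Matrix (Fin d) (Fin d) ℂ) (t : ℝ) : Matrix (Fin d) (Fin d) ℂ :=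
  NormedSpace.exp ((Complex.I * (t : ℂ)) • matLog σ)

open Polynomial in
/-- If finitely many complex coefficients satisfy `∑ c_s r_s^k = 0` for all `k`, then
`∑ c_s g (r_s) = 0` for every function `g`. -/
private lemma sum_mul_apply_eq_zero {ι : Type*} [Fintype ι] (r c : ι → ℂ)
    (h : ∀ k : ℕ, ∑ s, c s * r s ^ k = 0) (g : ℂ → ℂ) :
    ∑ s, c s * g (r s) = 0 := by
  classical
  have hpoly : ∀ p : ℂ[X], ∑ s, c s * p.eval (r s) = 0 := by
    intro p
    calc ∑ s, c s * p.eval (r s)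
        = ∑ s, ∑ k ∈ Finset.range (p.natDegree + 1), p.coeff k * (c s * r s ^ k) := by
          refine Finset.sum_congr rfl fun s _ => ?_
          rw [Polynomial.eval_eq_sum_range, Finset.mul_sum]
          exact Finset.sum_congr rfl fun k _ => by ring
      _ = ∑ k ∈ Finset.range (p.natDegree + 1), p.coeff k * ∑ s, c s * r s ^ k := by
          rw [Finset.sum_comm]
          exact Finset.sum_congr rfl fun k _ => (Finset.mul_sum _ _ _).symm
      _ = 0 := by simp [h]
  set T : Finset ℂ := Finset.image r Finset.univ with hT
  have hmem : ∀ s, r s ∈ T := fun s => Finset.mem_image_of_mem r (Finset.mem_univ s)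
  set q : ℂ[X] := ∑ v ∈ T, C (g v) * Lagrange.basis T id v with hq
  have hqe : ∀ s, q.eval (r s) = g (r s) := by
    intro s
    rw [hq, Polynomial.eval_finset_sum]
    rw [Finset.sum_eq_single (r s)]
    · have h1 : Polynomial.eval (r s) (Lagrange.basis T id (r s)) = 1 := by
        simpa using Lagrange.eval_basis_self (Set.injOn_id _) (hmem s)
      rw [Polynomial.eval_mul, Polynomial.eval_C, h1, mul_one]
    · intro v hv hne
      have h1 : Polynomial.eval (r s) (Lagrange.basis T id v) = 0 := by
        simpa using Lagrange.eval_basis_of_ne (v := id) hne (hmem s)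
      rw [Polynomial.eval_mul, Polynomial.eval_C, h1, mul_zero]
    · exact fun h' => absurd (hmem s) h'
  calc ∑ s, c s * g (r s) = ∑ s, c s * q.eval (r s) :=
        Finset.sum_congr rfl fun s _ => by rw [hqe]
    _ = 0 := hpoly q

private lemma commute_conj {n : ℕ} {U W P Q : Matrix (Fin n) (Fin n) ℂ}
    (hUW : U * W = 1) (hWU : W * U = 1) (h : Commute P Q) :
    Commute (U * P * W) (U * Q * W) := by
  have hW : ∀ R : Matrix (Fin n) (Fin n) ℂ, W * (U * R) = R := fun R => by
    rw [← mul_assoc, hWU, one_mul]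
  show (U * P * W) * (U * Q * W) = (U * Q * W) * (U * P * W)
  simp only [mul_assoc, hW]
  congr 1
  rw [← mul_assoc, ← mul_assoc, h.eq]

/-- Let `{S_α}` be self-adjoint operators, `M := {S_α}'` their commutant,
`σ` a full-rank state, and `V` a *-subalgebra of `M` invariant under the modular operator
`Δ_σ(Y) = σ Y σ^{−1}`. Then every `X ∈ V` commutes with `σ^{it} S_α σ^{−it}` for all
`t ∈ ℝ` and all `α`. -/
theorem modular_invariant_subalgebra_commutes_with_evolution
    {d : ℕ} {ι : Type*}
    (σ : Matrix (Fin d) (Fin d) ℂ) (hσ : σ.PosDef) (hσtr : σ.trace = 1)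
    (S : ι → Matrix (Fin d) (Fin d) ℂ) (hS : ∀ α, (S α)ᴴ = S α)
    (V : StarSubalgebra ℂ (Matrix (Fin d) (Fin d) ℂ))
    (hVM : ∀ Y ∈ V, ∀ α, Commute Y (S α))
    (hVmod : ∀ Y ∈ V, σ * Y * σ⁻¹ ∈ V) :
    ∀ X ∈ V, ∀ (t : ℝ) (α : ι),
      Commute X (modUnit σ t * S α * modUnit σ (-t)) := by
  classical
  intro X hX t α
  have hH : σ.IsHermitian := hσ.1
  set U : Matrix (Fin d) (Fin d) ℂ := (hH.eigenvectorUnitary : Matrix (Fin d) (Fin d) ℂ)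
    with hUdef
  have hU1 : U * star U = 1 := (Matrix.mem_unitaryGroup_iff).mp hH.eigenvectorUnitary.2
  have hU2 : star U * U = 1 := (Matrix.mem_unitaryGroup_iff').mp hH.eigenvectorUnitary.2
  have hU1' : ∀ R : Matrix (Fin d) (Fin d) ℂ, U * (star U * R) = R := fun R => by
    rw [← mul_assoc, hU1, one_mul]
  have hU2' : ∀ R : Matrix (Fin d) (Fin d) ℂ, star U * (U * R) = R := fun R => by
    rw [← mul_assoc, hU2, one_mul]
  set lam : Fin d → ℝ := hH.eigenvalues with hlamdef
  have hlampos : ∀ i, 0 < lam i := fun i => hσ.eigenvalues_pos i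
  set c : Fin d → ℂ := fun i => (lam i : ℂ) with hcdef
  have hcne : ∀ i, c i ≠ 0 := fun i => by
    simp only [hcdef, ne_eq, Complex.ofReal_eq_zero]
    exact (hlampos i).ne'
  have hspec : σ = U * diagonal c * star U := by
    have hst := hH.spectral_theorem
    rw [Unitary.conjStarAlgAut_apply] at hst
    exact hst
  have hlog : matLog σ = U * diagonal (fun i => (Real.log (lam i) : ℂ)) * star U := by
    rw [matLog, hH.cfc_eq, Matrix.IsHermitian.cfc]
    rfl
  set f : ℝ → Fin d → ℂ := fun s i => Complex.exp (Complex.I * s * Real.log (lam i)) with hfdef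
  have hmod : ∀ s : ℝ, modUnit σ s = U * diagonal (f s) * star U := by
    intro s
    have hUu : IsUnit U := ⟨⟨U, star U, hU1, hU2⟩, rfl⟩
    have hUi : U⁻¹ = star U := inv_eq_left_inv hU2
    rw [modUnit, hlog, mul_assoc, ← mul_smul_comm, ← smul_mul_assoc, ← Matrix.diagonal_smul,
      ← mul_assoc, ← hUi, Matrix.exp_conj U _ hUu, Matrix.exp_diagonal, hUi]
    congr 2
    rw [Pi.exp_def]
    funext i
    rw [hfdef]
    simp only [Pi.smul_apply, smul_eq_mul, ← Complex.exp_eq_exp_ℂ]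
  have hDinv : (diagonal c)⁻¹ = diagonal c⁻¹ := by
    refine Matrix.inv_eq_left_inv ?_
    rw [Matrix.diagonal_mul_diagonal,
      show (fun i => c⁻¹ i * c i) = fun _ : Fin d => (1 : ℂ) from
        funext fun i => inv_mul_cancel₀ (hcne i)]
    exact Matrix.diagonal_one
  have hσinv : σ⁻¹ = U * diagonal c⁻¹ * star U := by
    rw [hspec, Matrix.mul_inv_rev, Matrix.mul_inv_rev, inv_eq_left_inv hU2,
      inv_eq_left_inv hU1, hDinv, ← mul_assoc]
  have hconjpow : ∀ (v : Fin d → ℂ) (k : ℕ),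
      (U * diagonal v * star U) ^ k = U * diagonal (v ^ k) * star U := by
    intro v k
    induction k with
    | zero => rw [pow_zero, pow_zero, Pi.one_def, Matrix.diagonal_one, mul_one, hU1]
    | succ k ih =>
      rw [pow_succ, ih, pow_succ, Pi.mul_def, ← Matrix.diagonal_mul_diagonal]
      simp only [mul_assoc, hU2']
  have hpowmem : ∀ k : ℕ, σ ^ k * X * (σ⁻¹) ^ k ∈ V := by
    intro k
    induction k with
    | zero => simpa using hX
    | succ k ih =>
      have h := hVmod _ ih
      have e : σ * (σ ^ k * X * (σ⁻¹) ^ k) * σ⁻¹ = σ ^ (k + 1) * X * (σ⁻¹) ^ (k + 1) := by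
        rw [pow_succ σ⁻¹, pow_succ' σ]
        simp only [mul_assoc]
      rwa [e] at h
  set A : Matrix (Fin d) (Fin d) ℂ := star U * X * U with hAdef
  set B : Matrix (Fin d) (Fin d) ℂ := star U * S α * U with hBdef
  have hAB : ∀ k : ℕ, (diagonal (c ^ k) * A * diagonal (c⁻¹ ^ k)) * B
      = B * (diagonal (c ^ k) * A * diagonal (c⁻¹ ^ k)) := by
    intro k
    have hcom : Commute (σ ^ k * X * (σ⁻¹) ^ k) (S α) := hVM _ (hpowmem k) α
    have h := commute_conj hU2 hU1 hcom
    have h3 : star U * (σ ^ k * X * (σ⁻¹) ^ k) * U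
        = diagonal (c ^ k) * A * diagonal (c⁻¹ ^ k) := by
      rw [hσinv, hspec, hconjpow, hconjpow, hAdef]
      simp only [mul_assoc, hU1', hU2', hU1, hU2, mul_one, one_mul]
    rw [h3] at h
    exact h
  set g : ℂ → ℂ := fun z => Complex.exp (-(Complex.I * t) * Complex.log z) with hgdef
  have hg : ∀ i m : Fin d, f (-t) i * f t m = g (c i / c m) := by
    intro i m
    have h1 : c i / c m = ((lam i / lam m : ℝ) : ℂ) := by
      rw [hcdef]; push_cast; ring
    rw [hgdef]
    simp only
    rw [h1, ← Complex.ofReal_log (le_of_lt (div_pos (hlampos i) (hlampos m))),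
      Real.log_div (hlampos i).ne' (hlampos m).ne']
    rw [hfdef]
    simp only
    rw [← Complex.exp_add]
    congr 1
    push_cast
    ring
  set F : Matrix (Fin d) (Fin d) ℂ := diagonal (f t) with hF
  set F' : Matrix (Fin d) (Fin d) ℂ := diagonal (f (-t)) with hF'
  have hff : ∀ i, f t i * f (-t) i = 1 := by
    intro i
    rw [hfdef]
    simp only
    rw [← Complex.exp_add]
    rw [show Complex.I * ↑t * ↑(Real.log (lam i)) + Complex.I * ↑(-t) * ↑(Real.log (lam i))
        = 0 by push_cast; ring]
    exact Complex.exp_zero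
  have hFF' : F * F' = 1 := by
    rw [hF, hF', Matrix.diagonal_mul_diagonal,
      show (fun i => f t i * f (-t) i) = fun _ : Fin d => (1 : ℂ) from funext fun i => hff i]
    exact Matrix.diagonal_one
  have hF'F : F' * F = 1 := by
    rw [hF, hF', Matrix.diagonal_mul_diagonal,
      show (fun i => f (-t) i * f t i) = fun _ : Fin d => (1 : ℂ) from
        funext fun i => by rw [mul_comm]; exact hff i]
    exact Matrix.diagonal_one
  have hcore : Commute (F' * A * F) B := by
    show (F' * A * F) * B = B * (F' * A * F)
    ext i j
    have key := sum_mul_apply_eq_zero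
      (Sum.elim (fun m => c i / c m) (fun m => c m / c j))
      (Sum.elim (fun m => A i m * B m j) (fun m => -(B i m * A m j)))
      (by
        intro k
        have h1 := congrFun (congrFun (hAB k) i) j
        rw [Matrix.mul_apply, Matrix.mul_apply] at h1
        simp only [Matrix.mul_diagonal, Matrix.diagonal_mul, Pi.pow_apply, Pi.inv_apply] at h1
        rw [Fintype.sum_sum_type]
        simp only [Sum.elim_inl, Sum.elim_inr]
        have e1 : ∀ m, (A i m * B m j) * (c i / c m) ^ k
            = (c i ^ k * A i m * (c m)⁻¹ ^ k) * B m j := by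
          intro m
          rw [div_pow, div_eq_mul_inv, ← inv_pow]
          ring
        have e2 : ∀ m, (-(B i m * A m j)) * (c m / c j) ^ k
            = -(B i m * (c m ^ k * A m j * (c j)⁻¹ ^ k)) := by
          intro m
          rw [div_pow, div_eq_mul_inv, ← inv_pow]
          ring
        simp_rw [e1, e2]
        rw [Finset.sum_neg_distrib, h1, add_neg_cancel]) g
    rw [Fintype.sum_sum_type] at key
    simp only [Sum.elim_inl, Sum.elim_inr] at key
    have e3 : ∀ m, (A i m * B m j) * g (c i / c m) = (f (-t) i * A i m * f t m) * B m j := by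
      intro m; rw [← hg]; ring
    have e4 : ∀ m, (-(B i m * A m j)) * g (c m / c j)
        = -(B i m * (f (-t) m * A m j * f t j)) := by
      intro m; rw [← hg]; ring
    simp_rw [e3, e4] at key
    rw [Finset.sum_neg_distrib, add_neg_eq_zero] at key
    rw [Matrix.mul_apply, Matrix.mul_apply]
    simp only [hF, hF', Matrix.mul_diagonal, Matrix.diagonal_mul]
    exact key
  have hmain : Commute A (F * B * F') := by
    have h := commute_conj hFF' hF'F hcore
    have eA : F * (F' * A * F) * F' = A := by
      have h1 : ∀ R : Matrix (Fin d) (Fin d) ℂ, F * (F' * R) = R := fun R => by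
        rw [← mul_assoc, hFF', one_mul]
      calc F * (F' * A * F) * F' = F * (F' * (A * (F * F'))) := by simp only [mul_assoc]
        _ = A := by rw [hFF', mul_one, h1]
    rwa [eA] at h
  have h := commute_conj hU1 hU2 hmain
  have eX : U * A * star U = X := by
    rw [hAdef]
    calc U * (star U * X * U) * star U = U * (star U * (X * (U * star U))) := by
          simp only [mul_assoc]
      _ = X := by rw [hU1, mul_one, hU1']
  have eM : U * (F * B * F') * star U = modUnit σ t * S α * modUnit σ (-t) := by
    rw [hmod t, hmod (-t), hBdef, hF, hF']
    simp only [mul_assoc, hU2']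
  rwa [eX, eM] at h

end
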